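/- For a nonnegative integer d, let J be the (d+1)×(d+1) matrix with entries J_{ii} = (1+x_i)/∏_{k}(1+x_k) and J_{ij} = -x_i(1+x_i)/((1+x_j) ∏_{k}(1+x_k)) for i ≠ j. Then det(J) = (1 - ∑_{k=0}^{d} x_k/(1+2x_k)) * ∏_{j=0}^{d} (1+2x_j)/(1+x_j)^{d+1}. -/

import Mathlib

open Finset

/-- The variable `x_i`, viewed in the field of rational functions in `x_0, …, x_d` over `ℚ`. -/
noncomputable def ratVar (d : ℕ) (i : Fin (d + 1)) :
    FractionRing (MvPolynomial (Fin (d + 1)) ℚ) :=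
  algebraMap (MvPolynomial (Fin (d + 1)) ℚ) _ (MvPolynomial.X i)

/-!
With `P = ∏ₖ (1 + xₖ)`, the Jacobian is a diagonal matrix plus a rank-one matrix,
`J = diag((1 + 2xᵢ)/P) + u vᵀ` with `uᵢ = -xᵢ(1 + xᵢ)/P` and `vⱼ = 1/(1 + xⱼ)`,
so the matrix determinant lemma gives `det J = ∏ᵢ (1 + 2xᵢ)/P · (1 - ∑ₖ xₖ/(1 + 2xₖ))`.
This holds in any field where all `1 + xᵢ` and `1 + 2xᵢ` are nonzero, which is the case for
the variables of the rational function field since these polynomials have constant term `1`.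
-/

namespace Matrix

variable {K n : Type*} [Field K] [Fintype n] [DecidableEq n]

theorem det_diagonal_add_vecMulVec {b : n → K} (hb : ∀ i, b i ≠ 0) (u v : n → K) :
    (diagonal b + vecMulVec u v).det = (∏ i, b i) * (1 + ∑ i, v i * u i / b i) := by
  have hfactor : diagonal b + vecMulVec u v =
      diagonal b * (1 + vecMulVec (fun i => u i / b i) v) := by
    ext i j
    have := hb i
    rcases eq_or_ne i j with rfl | hij
    · simp only [add_apply, diagonal_apply_eq, vecMulVec_apply, diagonal_mul, one_apply_eq]
      field_simp
    · simp only [add_apply, diagonal_apply_ne _ hij, vecMulVec_apply, zero_add, diagonal_mul,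
        one_apply_ne hij]
      field_simp
  rw [hfactor, det_mul, det_diagonal, vecMulVec_eq Unit,
    det_one_add_replicateCol_mul_replicateRow]
  simp only [dotProduct, mul_div_assoc]

end Matrix

section Jacobian

variable {K n : Type*} [Field K] [Fintype n] [DecidableEq n]

theorem jacobian_eq_diagonal_add_vecMulVec {x : n → K} (hx : ∀ i, 1 + x i ≠ 0) :
    (Matrix.of fun i j =>
        if i = j then (1 + x i) / ∏ k, (1 + x k)
        else -(x i * (1 + x i)) / ((1 + x j) * ∏ k, (1 + x k))) =
      Matrix.diagonal (fun i => (1 + 2 * x i) / ∏ k, (1 + x k)) +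
        Matrix.vecMulVec (fun i => -(x i * (1 + x i)) / ∏ k, (1 + x k))
          (fun j => 1 / (1 + x j)) := by
  have hP : ∏ k, (1 + x k) ≠ 0 := prod_ne_zero_iff.mpr fun k _ => hx k
  ext i j
  have := hx j
  rcases eq_or_ne i j with rfl | hij
  · simp only [Matrix.of_apply, ↓reduceIte, one_div, Matrix.add_apply,
      Matrix.diagonal_apply_eq, Matrix.vecMulVec_apply]
    field_simp
    ring
  · simp only [Matrix.of_apply, hij, ↓reduceIte, one_div, Matrix.add_apply,
      Matrix.diagonal_apply_ne _ hij, Matrix.vecMulVec_apply, zero_add]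
    field_simp

theorem det_jacobian_of_ne_zero {x : n → K} (hx : ∀ i, 1 + x i ≠ 0)
    (hx₂ : ∀ i, 1 + 2 * x i ≠ 0) :
    (Matrix.of fun i j =>
        if i = j then (1 + x i) / ∏ k, (1 + x k)
        else -(x i * (1 + x i)) / ((1 + x j) * ∏ k, (1 + x k))).det =
      (1 - ∑ k, x k / (1 + 2 * x k)) *
        ∏ j, (1 + 2 * x j) / (1 + x j) ^ Fintype.card n := by
  have hP : ∏ k, (1 + x k) ≠ 0 := prod_ne_zero_iff.mpr fun k _ => hx k
  rw [jacobian_eq_diagonal_add_vecMulVec hx,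
    Matrix.det_diagonal_add_vecMulVec fun i => div_ne_zero (hx₂ i) hP]
  have hsummand : ∀ i, 1 / (1 + x i) * (-(x i * (1 + x i)) / ∏ k, (1 + x k)) /
      ((1 + 2 * x i) / ∏ k, (1 + x k)) = -(x i / (1 + 2 * x i)) := by
    intro i
    have := hx i
    have := hx₂ i
    field_simp
  have hprod : ∏ i, (1 + 2 * x i) / ∏ k, (1 + x k) =
      ∏ j, (1 + 2 * x j) / (1 + x j) ^ Fintype.card n := by
    rw [prod_div_distrib, prod_div_distrib, prod_const, prod_pow, card_univ]
  rw [hprod, mul_comm]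
  simp only [hsummand, sum_neg_distrib, sub_eq_add_neg]

end Jacobian

theorem one_add_mul_ratVar_ne_zero (d c : ℕ) (i : Fin (d + 1)) :
    1 + (c : FractionRing (MvPolynomial (Fin (d + 1)) ℚ)) * ratVar d i ≠ 0 := by
  rw [show 1 + (c : FractionRing (MvPolynomial (Fin (d + 1)) ℚ)) * ratVar d i =
      algebraMap _ _ (1 + (c : MvPolynomial (Fin (d + 1)) ℚ) * MvPolynomial.X i) by
        simp [ratVar],
    map_ne_zero_iff _ (IsFractionRing.injective _ _)]
  intro h
  simpa using congrArg (MvPolynomial.eval 0) h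

/-- The determinant of the Jacobian matrix `J` with entries
`J_{ii} = (1+x_i)/∏_k (1+x_k)` and `J_{ij} = -x_i(1+x_i)/((1+x_j) ∏_k (1+x_k))` for `i ≠ j`
equals `(1 − ∑_k x_k/(1+2x_k)) ∏_j (1+2x_j)/(1+x_j)^{d+1}`. -/
theorem det_jacobian (d : ℕ) :
    (Matrix.of fun i j : Fin (d + 1) =>
        if i = j then
          (1 + ratVar d i) / ∏ k : Fin (d + 1), (1 + ratVar d k)
        else
          -(ratVar d i * (1 + ratVar d i)) /
            ((1 + ratVar d j) * ∏ k : Fin (d + 1), (1 + ratVar d k))).det =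
      (1 - ∑ k : Fin (d + 1), ratVar d k / (1 + 2 * ratVar d k)) *
        ∏ j : Fin (d + 1), (1 + 2 * ratVar d j) / (1 + ratVar d j) ^ (d + 1) := by
  simpa using det_jacobian_of_ne_zero (x := ratVar d)
    (fun i => by simpa using one_add_mul_ratVar_ne_zero d 1 i)
    (fun i => by simpa using one_add_mul_ratVar_ne_zero d 2 i)
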